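/- For any peak Λ ≤ 1/2, in any swap Schelling game (G,b,Λ) on an almost regular graph G, no profitable swap can occur between an agent below the peak and an agent above the peak. -/

import Mathlib

/-
An agent below the peak gains from a swap only if its same-colour fraction rises, and an agent
above the peak only if it falls. Since `Λ ≤ 1/2`, the agent moving from `w` to `v` lands above
the peak: its new fraction is at least `1 - f_v > 1 - Λ ≥ Λ`. Counting closed neighbourhoods,
an agent that moves into a node of degree `d` whose resident of the other colour had `s`
same-coloured nodes finds `d + 2 - a - s` of its own colour, `a` indicating whether `v` and `w`
are adjacent. The two required strict inequalities between these fractions then contradict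
each other as soon as the degrees of `v` and `w` differ by at most one.
-/

open Finset

namespace SwapSchelling

variable {V : Type*} [Fintype V] [DecidableEq V]

open scoped Classical in
/-- The closed neighborhood `N[v]` of a node `v` in `G`, as a `Finset`. -/
noncomputable def closedNbhd (G : SimpleGraph V) (v : V) : Finset V :=
  univ.filter (fun u => u = v ∨ G.Adj v u)

open scoped Classical in
/-- The degree `δ(v)` of a node `v` in `G`. -/
noncomputable def deg (G : SimpleGraph V) (v : V) : ℕ :=
  (univ.filter (fun u => G.Adj v u)).card

/-- The maximum degree `Δ(G)`. -/
noncomputable def maxDeg (G : SimpleGraph V) : ℕ := univ.sup (deg G)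

/-- The minimum degree `δ(G)`. -/
noncomputable def minDeg (G : SimpleGraph V) : ℕ := sInf (Set.range (deg G))

open scoped Classical in
/-- `frac G c v` is the fraction of nodes in the closed neighborhood of `v` that have
the same color as `v` (that is, `f_i(σ)` for the agent `i` occupying node `v`). -/
noncomputable def frac (G : SimpleGraph V) (c : V → Bool) (v : V) : ℝ :=
  (((closedNbhd G v).filter (fun u => c u = c v)).card : ℝ) / ((closedNbhd G v).card : ℝ)

/-- The coloring obtained from `c` after the agents on nodes `v` and `w` swap positions. -/
def swapColor (c : V → Bool) (v w : V) : V → Bool := c ∘ Equiv.swap v w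

/-- A single-peaked utility function `p` with peak at `Λ`: `p 0 = 0`, `p` is strictly
increasing on `[0,Λ]`, `p Λ = 1`, and `p x = p (Λ(1-x)/(1-Λ))` for `x ∈ [Λ,1]`. -/
structure IsSinglePeaked (p : ℝ → ℝ) (Λ : ℝ) : Prop where
  peak_mem : Λ ∈ Set.Ioo (0 : ℝ) 1
  map_zero : p 0 = 0
  strictMonoOn : StrictMonoOn p (Set.Icc 0 Λ)
  map_peak : p Λ = 1
  symm : ∀ x ∈ Set.Icc Λ 1, p x = p (Λ * (1 - x) / (1 - Λ))

/-- A strategy profile: a 2-coloring of the nodes with exactly `b` blue (`true`) nodes. -/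
def IsProfile (c : V → Bool) (b : ℕ) : Prop :=
  (univ.filter (fun v => c v = true)).card = b

/-- The structural data of a swap Schelling game `(G, b, Λ)` with utility function `p`:
`G` is connected, there are `b` blue agents with `1 ≤ b ≤ n/2`, and `p` is a
single-peaked utility function with peak `Λ`. -/
structure IsGame (G : SimpleGraph V) (b : ℕ) (Λ : ℝ) (p : ℝ → ℝ) : Prop where
  connected : G.Connected
  one_le_b : 1 ≤ b
  b_le_half : 2 * b ≤ Fintype.card V
  singlePeaked : IsSinglePeaked p Λ

/-- The swap of the two (differently colored) agents occupying nodes `v` and `w`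
is profitable: both agents strictly increase their utility. -/
def ProfitableSwap (G : SimpleGraph V) (p : ℝ → ℝ) (c : V → Bool) (v w : V) : Prop :=
  c v ≠ c w ∧
  p (frac G (swapColor c v w) w) > p (frac G c v) ∧
  p (frac G (swapColor c v w) v) > p (frac G c w)

/-- A swap equilibrium: no profitable swap exists. -/
def IsSwapEquilibrium (G : SimpleGraph V) (p : ℝ → ℝ) (c : V → Bool) : Prop :=
  ∀ v w, ¬ ProfitableSwap G p c v w

open scoped Classical in
/-- The degree of integration: the number of non-segregated agents. -/
noncomputable def DoI (G : SimpleGraph V) (c : V → Bool) : ℕ :=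
  (univ.filter (fun v => frac G c v ≠ 1)).card

open scoped Classical in
/-- The number of monochromatic edges of `G` under the coloring `c`. -/
noncomputable def Phi (G : SimpleGraph V) (c : V → Bool) : ℕ :=
  (G.edgeFinset.filter (fun e => ∀ u ∈ e, ∀ w ∈ e, c u = c w)).card

open scoped Classical in
/-- The number of edges of `G`. -/
noncomputable def numEdges (G : SimpleGraph V) : ℕ :=
  (univ.filter (fun e : Sym2 V => e ∈ G.edgeSet)).card

/-- A finset of nodes is an independent set of `G`. -/
def IsIndepSet (G : SimpleGraph V) (s : Finset V) : Prop :=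
  ∀ u ∈ s, ∀ w ∈ s, ¬ G.Adj u w

open scoped Classical in
/-- The independence number `α(G)`. -/
noncomputable def indepNum (G : SimpleGraph V) : ℕ :=
  univ.sup (fun s : Finset V => if IsIndepSet G s then s.card else 0)

open scoped Classical in
/-- The degree of `v` inside the subgraph of `G` induced by the node set `s`. -/
noncomputable def degOn (G : SimpleGraph V) (s : Finset V) (v : V) : ℕ :=
  (s.filter (fun u => G.Adj v u)).card


lemma mem_closedNbhd {G : SimpleGraph V} {v u : V} :
    u ∈ closedNbhd G v ↔ u = v ∨ G.Adj v u := by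
  simp [closedNbhd]

lemma card_closedNbhd (G : SimpleGraph V) (v : V) : (closedNbhd G v).card = deg G v + 1 := by
  classical
  have h : closedNbhd G v = insert v (univ.filter (G.Adj v)) := by
    ext u
    simp [closedNbhd]
  rw [h, card_insert_of_notMem (by simp), deg]

noncomputable def sameColorCount (G : SimpleGraph V) (c : V → Bool) (v : V) : ℕ :=
  ((closedNbhd G v).filter (fun u => c u = c v)).card

lemma frac_eq_div (G : SimpleGraph V) (c : V → Bool) (v : V) :
    frac G c v = sameColorCount G c v / (deg G v + 1) := by
  rw [frac, card_closedNbhd]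
  push_cast
  rfl

omit [Fintype V] in
lemma swapColor_comm (c : V → Bool) (v w : V) : swapColor c w v = swapColor c v w := by
  rw [swapColor, Equiv.swap_comm, swapColor]

open scoped Classical in
lemma sameColorCount_swapColor_add (G : SimpleGraph V) {c : V → Bool} {v w : V}
    (hvw : c v ≠ c w) :
    sameColorCount G (swapColor c v w) w + sameColorCount G c w + (if G.Adj v w then 1 else 0)
      = deg G w + 2 := by
  have hne : v ≠ w := fun h => hvw (congrArg c h)
  -- A node of `N[w]` other than `v`, `w` has exactly one of the two colours; `w` counts twice.
  have hpt : ∀ u, ((if swapColor c v w u = swapColor c v w w then 1 else 0) +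
      (if c u = c w then 1 else 0) + (if u = v then 1 else 0) : ℕ) =
      1 + (if u = w then 1 else 0) := by
    intro u
    simp only [swapColor, Function.comp_apply, Equiv.swap_apply_right]
    rcases eq_or_ne u v with rfl | huv
    · simp [hne, hvw, Ne.symm hvw]
    rcases eq_or_ne u w with rfl | huw
    · simp [huv]
    rw [Equiv.swap_apply_of_ne_of_ne huv huw]
    simp only [huv, huw, if_false]
    revert hvw; cases c u <;> cases c v <;> cases c w <;> decide
  have hsum := sum_congr rfl (fun u (_ : u ∈ closedNbhd G w) => hpt u)
  simp only [sum_add_distrib, ← card_filter, filter_eq'] at hsum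
  rw [sum_const, smul_eq_mul, mul_one, card_closedNbhd] at hsum
  simp only [mem_closedNbhd, hne, G.adj_comm w v, false_or, apply_ite card, card_singleton,
    card_empty, true_or, if_true] at hsum
  rw [sameColorCount, sameColorCount, hsum]

open scoped Classical in
lemma sameColorCount_swapColor_add_left (G : SimpleGraph V) {c : V → Bool} {v w : V}
    (hvw : c v ≠ c w) :
    sameColorCount G (swapColor c v w) v + sameColorCount G c v + (if G.Adj v w then 1 else 0)
      = deg G v + 2 := by
  have h := sameColorCount_swapColor_add G hvw.symm
  rwa [swapColor_comm, if_congr (G.adj_comm w v) rfl rfl] at h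

lemma frac_nonneg (G : SimpleGraph V) (c : V → Bool) (v : V) : 0 ≤ frac G c v := by
  unfold frac
  positivity

lemma frac_le_one (G : SimpleGraph V) (c : V → Bool) (v : V) : frac G c v ≤ 1 :=
  div_le_one_of_le₀ (by exact_mod_cast card_filter_le _ _) (by positivity)

lemma one_sub_frac_le_frac_swapColor (G : SimpleGraph V) {c : V → Bool} {v w : V}
    (hvw : c v ≠ c w) : 1 - frac G c v ≤ frac G (swapColor c v w) v := by
  have hcount := sameColorCount_swapColor_add_left G hvw
  rw [frac_eq_div, frac_eq_div, sub_le_iff_le_add, ← add_div, le_div_iff₀ (by positivity),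
    one_mul]
  exact_mod_cast (by split_ifs at hcount <;> omega :
    deg G v + 1 ≤ sameColorCount G (swapColor c v w) v + sameColorCount G c v)

omit [DecidableEq V] in
lemma deg_le_maxDeg (G : SimpleGraph V) (v : V) : deg G v ≤ maxDeg G :=
  le_sup (mem_univ v)

omit [DecidableEq V] in
lemma minDeg_le_deg (G : SimpleGraph V) (v : V) : minDeg G ≤ deg G v :=
  Nat.sInf_le ⟨v, rfl⟩

omit [DecidableEq V] in
lemma deg_le_deg_add_one (G : SimpleGraph V) (hreg : maxDeg G ≤ minDeg G + 1) (v w : V) :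
    deg G v ≤ deg G w + 1 :=
  (deg_le_maxDeg G v).trans (hreg.trans (Nat.add_le_add_right (minDeg_le_deg G w) 1))

/- Adding the two cross-multiplied inequalities gives `(dv + 2 - a)(dw + 1) < (dw + 2 - a)(dv + 1)`,
which is absurd for `a = 1` and forces `dv = dw + 1` for `a = 0`; but then
`sv (dw + 1) + sw (dw + 2)` lies strictly between `(dw + 2)² - 1` and `(dw + 2)²`. -/
lemma cross_mul_le_of_swap_counts {sv sw sv' sw' dv dw a : ℕ} (ha : a ≤ 1) (hd : dv ≤ dw + 1)
    (hv : sv' + sv + a = dv + 2) (hw : sw' + sw + a = dw + 2)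
    (h : sv * (dw + 1) < sw' * (dv + 1)) : sw * (dv + 1) ≤ sv' * (dw + 1) := by
  by_contra! h'
  have hsum : (sv + sv') * (dw + 1) < (sw + sw') * (dv + 1) := by linarith
  obtain rfl | rfl : a = 0 ∨ a = 1 := by omega
  · obtain rfl : dv = dw + 1 := by
      rw [show sv + sv' = dv + 2 by omega, show sw + sw' = dw + 2 by omega] at hsum
      nlinarith
    nlinarith
  · rw [show sv + sv' = dv + 1 by omega, show sw + sw' = dw + 1 by omega, mul_comm] at hsum
    exact hsum.false

lemma frac_le_frac_swapColor_of_lt (G : SimpleGraph V) {c : V → Bool} {v w : V}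
    (hd : deg G v ≤ deg G w + 1) (hvw : c v ≠ c w)
    (h : frac G c v < frac G (swapColor c v w) w) :
    frac G c w ≤ frac G (swapColor c v w) v := by
  simp only [frac_eq_div] at h ⊢
  rw [div_lt_div_iff₀ (by positivity) (by positivity)] at h
  rw [div_le_div_iff₀ (by positivity) (by positivity)]
  exact_mod_cast cross_mul_le_of_swap_counts (by split_ifs <;> omega) hd
    (sameColorCount_swapColor_add_left G hvw) (sameColorCount_swapColor_add G hvw)
    (by exact_mod_cast h)

namespace IsSinglePeaked

variable {p : ℝ → ℝ} {Λ : ℝ}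

lemma antitoneOn (hp : IsSinglePeaked p Λ) : AntitoneOn p (Set.Icc Λ 1) := by
  obtain ⟨hΛ0, hΛ1⟩ := hp.peak_mem
  have hreflect : ∀ x ∈ Set.Icc Λ 1, Λ * (1 - x) / (1 - Λ) ∈ Set.Icc 0 Λ := fun x hx =>
    ⟨by apply div_nonneg <;> nlinarith [hx.2],
      by rw [div_le_iff₀ (by linarith)]; nlinarith [hx.1]⟩
  intro x hx y hy hxy
  rw [hp.symm x hx, hp.symm y hy]
  exact hp.strictMonoOn.monotoneOn (hreflect y hy) (hreflect x hx)
    (div_le_div_of_nonneg_right (by nlinarith) (by linarith))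

lemma lt_of_map_lt_of_lt_peak (hp : IsSinglePeaked p Λ) {x y : ℝ} (hx : x ∈ Set.Ico 0 Λ)
    (hy : 0 ≤ y) (h : p x < p y) : x < y := by
  by_contra! hyx
  exact h.not_ge (hp.strictMonoOn.monotoneOn ⟨hy, hyx.trans hx.2.le⟩ ⟨hx.1, hx.2.le⟩ hyx)

lemma lt_of_map_lt_of_peak_le (hp : IsSinglePeaked p Λ) {x y : ℝ} (hx : x ∈ Set.Icc Λ 1)
    (hy : y ∈ Set.Icc Λ 1) (h : p x < p y) : y < x :=
  hp.antitoneOn.reflect_lt hx hy h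

end IsSinglePeaked

theorem no_profitable_swap_different_sides_almost_regular_general
    {V : Type*} [Fintype V] [DecidableEq V] (G : SimpleGraph V) (b : ℕ) (Λ : ℝ) (p : ℝ → ℝ)
    (hgame : IsGame G b Λ p) (hΛ : Λ ≤ 1 / 2)
    (hreg : maxDeg G ≤ minDeg G + 1)
    (c : V → Bool) (v w : V)
    (hv : frac G c v < Λ) (hw : Λ < frac G c w) :
    ¬ ProfitableSwap G p c v w := by
  rintro ⟨hvw, hv_gain, hw_gain⟩
  have hp := hgame.singlePeaked
  have hv_up : frac G c v < frac G (swapColor c v w) w :=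
    hp.lt_of_map_lt_of_lt_peak ⟨frac_nonneg G c v, hv⟩ (frac_nonneg _ _ _) hv_gain
  have hpeak_lt : Λ < frac G (swapColor c v w) v := by
    linarith [one_sub_frac_le_frac_swapColor G hvw]
  have hw_down : frac G (swapColor c v w) v < frac G c w :=
    hp.lt_of_map_lt_of_peak_le ⟨hw.le, frac_le_one G c w⟩ ⟨hpeak_lt.le, frac_le_one _ _ _⟩
      hw_gain
  exact (frac_le_frac_swapColor_of_lt G (deg_le_deg_add_one G hreg v w) hvw hv_up).not_gt hw_down

/-- For any peak `Λ ≤ 1/2`, in games on almost regular graphs, no profitable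
swap can occur between an agent below the peak and an agent above the peak. -/
theorem no_profitable_swap_different_sides_almost_regular
    {V : Type*} [Fintype V] [DecidableEq V] (G : SimpleGraph V) (b : ℕ) (Λ : ℝ) (p : ℝ → ℝ)
    (hgame : IsGame G b Λ p) (hΛ : Λ ≤ 1 / 2)
    (hreg : maxDeg G ≤ minDeg G + 1)
    (c : V → Bool) (hc : IsProfile c b) (v w : V)
    (hv : frac G c v < Λ) (hw : Λ < frac G c w) :
    ¬ ProfitableSwap G p c v w :=
  no_profitable_swap_different_sides_almost_regular_general G b Λ p hgame hΛ hreg c v w hv hw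

end SwapSchelling
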